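/- Let A be an abelian group generated by two elements a, b, and let φ, ψ : A → S_n be homomorphisms with φ(a) = ψ(a) = σ, where σ = σ₁⋯σ_l with each σᵢ a product of kᵢ pairwise disjoint cycles of length dᵢ and the dᵢ pairwise distinct. Then φ and ψ are conjugate if and only if, for every g ∈ A, the S_{Fix(σ)}-components of φ(g) and ψ(g) are conjugate in S_n and, for each 1 ≤ i ≤ l, the Cent₀(σᵢ)-components of φ(g) and ψ(g) are conjugate in S_n (i.e. φ and ψ are element-conjugate on restriction to S_{Fix(σ)} and to each Cent₀(σᵢ)). -/

import Mathlib

open Equiv Equiv.Perm Finset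

/-- The "non-trivial centralizer" `Cent₀(σ)`: permutations commuting with `σ`
whose support is contained in the support of `σ`. -/
def Cent0 {n : ℕ} (σ : Equiv.Perm (Fin n)) : Subgroup (Equiv.Perm (Fin n)) where
  carrier := {π | Commute π σ ∧ π.support ⊆ σ.support}
  one_mem' := ⟨Commute.one_left σ, by simp⟩
  mul_mem' := by
    intro a b ha hb
    exact ⟨ha.1.mul_left hb.1, (Equiv.Perm.support_mul_le a b).trans (sup_le ha.2 hb.2)⟩
  inv_mem' := by
    intro a ha
    exact ⟨ha.1.inv_left, by rw [Equiv.Perm.support_inv]; exact ha.2⟩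

/-- The product `∏_{i ∈ s} τᵢ^{zᵢ}` of powers of pairwise disjoint permutations. -/
def Kprod {n k : ℕ} (τ : Fin k → Equiv.Perm (Fin n))
    (hdisj : ∀ i j, i ≠ j → Equiv.Perm.Disjoint (τ i) (τ j))
    (s : Finset (Fin k)) (z : Fin k → ℤ) : Equiv.Perm (Fin n) :=
  s.noncommProd (fun i => τ i ^ z i)
    (fun a _ b _ hab => Commute.zpow_zpow ((hdisj a b hab).commute) _ _)

/-- The subgroup `H_σ = { x ∈ S_{X_σ} : xσx⁻¹ = σ^z for some integer z }`, as a set. -/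
def Hgrp {n : ℕ} (σ : Equiv.Perm (Fin n)) : Set (Equiv.Perm (Fin n)) :=
  {x | x.support ⊆ σ.support ∧ ∃ z : ℤ, x * σ * x⁻¹ = σ ^ z}

/-!
Every `φ g` commutes with `σ = φ a`, so it preserves `Fix(σ)` and each `supp σᵢ`: these are the
points of `σ`-period `1` and `dᵢ`, and the `dᵢ` are distinct. Conjugacy can therefore be decided
block by block. On one block `B`, `a` acts with all orbits of the same length `d`, so every
stabilizer `H` meets `⟨a⟩` in `⟨a ^ d⟩`; since `A ⧸ ⟨a⟩` is cyclic, `H = ⟨a ^ d, g⟩` for a single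
`g`. The points whose stabilizer contains `H` are then exactly the fixed points of `g`, whose
number element-conjugacy controls. Downward induction over the finitely many stabilizers shows
that `φ` and `ψ` have equally many points with each stabilizer on `B`, and finite actions of an
abelian group with this property are isomorphic. Gluing these isomorphisms gives the conjugator.
-/

open MulAction

namespace MulAction

variable {Γ X Y : Type*} [CommGroup Γ] [MulAction Γ X] [MulAction Γ Y]

theorem stabilizer_smul_of_comm (g : Γ) (x : X) : stabilizer Γ (g • x) = stabilizer Γ x := by
  ext h
  simp only [mem_stabilizer_iff, smul_comm h g, smul_left_cancel_iff]

theorem stabilizer_eq_of_mem_orbit {x y : X} (h : y ∈ orbit Γ x) :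
    stabilizer Γ y = stabilizer Γ x := by
  obtain ⟨g, rfl⟩ := h
  exact stabilizer_smul_of_comm g x

theorem stabilizer_out_mk (x : X) :
    stabilizer Γ (Quotient.mk'' x : orbitRel.Quotient Γ X).out = stabilizer Γ x :=
  stabilizer_eq_of_mem_orbit (orbitRel_apply.mp (Quotient.mk_out' x))

theorem card_stabilizer_eq_card_orbits_mul_index [Finite X] (H : Subgroup Γ) :
    Nat.card {x : X // stabilizer Γ x = H} =
      Nat.card {ω : orbitRel.Quotient Γ X // stabilizer Γ ω.out = H} * H.index := by
  classical
  have := Fintype.ofFinite (orbitRel.Quotient Γ X)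
  rw [← Nat.card_congr (Equiv.sigmaSubtypeFiberEquivSubtype (Quotient.mk'' : X → _)
    (q := fun ω : orbitRel.Quotient Γ X => stabilizer Γ ω.out = H)
    (fun x => by rw [stabilizer_out_mk])), Nat.card_sigma]
  have hfib : ∀ ω : {ω : orbitRel.Quotient Γ X // stabilizer Γ ω.out = H},
      Nat.card {x : X // Quotient.mk'' x = ω.1} = H.index := by
    rintro ⟨ω, rfl⟩
    rw [index_stabilizer, ← Nat.card_coe_set_eq,
      ← orbitRel.Quotient.orbit_eq_orbit_out ω Quotient.out_eq']
    exact Nat.card_congr (Equiv.subtypeEquivRight fun x => orbitRel.Quotient.mem_orbit.symm)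
  simp only [hfib, Finset.sum_const, Finset.card_univ, smul_eq_mul, Nat.card_eq_fintype_card]

theorem index_stabilizer_ne_zero [Finite X] (x : X) : (stabilizer Γ x).index ≠ 0 := by
  rw [index_stabilizer]
  exact Set.ncard_ne_zero_of_mem (mem_orbit_self x) (Set.toFinite _)

theorem card_orbits_stabilizer_eq_zero [Finite X] {H : Subgroup Γ} (hH : H.index = 0) :
    Nat.card {ω : orbitRel.Quotient Γ X // stabilizer Γ ω.out = H} = 0 :=
  have : IsEmpty {ω : orbitRel.Quotient Γ X // stabilizer Γ ω.out = H} :=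
    ⟨fun ω => index_stabilizer_ne_zero _ (ω.2 ▸ hH)⟩
  Nat.card_of_isEmpty

theorem card_orbits_stabilizer_eq [Finite X] [Finite Y]
    (h : ∀ H : Subgroup Γ, Nat.card {x : X // stabilizer Γ x = H} =
      Nat.card {y : Y // stabilizer Γ y = H}) (H : Subgroup Γ) :
    Nat.card {ω : orbitRel.Quotient Γ X // stabilizer Γ ω.out = H} =
      Nat.card {ω : orbitRel.Quotient Γ Y // stabilizer Γ ω.out = H} := by
  by_cases hH : H.index = 0
  · rw [card_orbits_stabilizer_eq_zero hH, card_orbits_stabilizer_eq_zero hH]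
  · have := h H
    rw [card_stabilizer_eq_card_orbits_mul_index, card_stabilizer_eq_card_orbits_mul_index] at this
    exact Nat.eq_of_mul_eq_mul_right (Nat.pos_of_ne_zero hH) this

theorem exists_equiv_smul_of_card_stabilizer_eq [Finite X] [Finite Y]
    (h : ∀ H : Subgroup Γ, Nat.card {x : X // stabilizer Γ x = H} =
      Nat.card {y : Y // stabilizer Γ y = H}) :
    ∃ e : X ≃ Y, ∀ (g : Γ) (x : X), e (g • x) = g • e x := by
  -- Match the orbits of `X` and `Y` with equal stabilizers `H`, then identify each with `Γ ⧸ H`.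
  let E : orbitRel.Quotient Γ X ≃ orbitRel.Quotient Γ Y :=
    Equiv.ofFiberEquiv fun H => (Finite.card_eq.1 (card_orbits_stabilizer_eq h H)).some
  have hE : ∀ ω, stabilizer Γ (E ω).out = stabilizer Γ ω.out := fun ω =>
    Equiv.ofFiberEquiv_map (f := fun ω : orbitRel.Quotient Γ X => stabilizer Γ ω.out)
      (g := fun ω : orbitRel.Quotient Γ Y => stabilizer Γ ω.out) _ ω
  let e : X ≃ Y := (selfEquivSigmaOrbitsQuotientStabilizer Γ X).trans
    ((Equiv.sigmaCongr E fun ω => Subgroup.quotientEquivOfEq (hE ω).symm).trans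
      (selfEquivSigmaOrbitsQuotientStabilizer Γ Y).symm)
  have he : ∀ ω (g : Γ), e (g • ω.out) = g • (E ω).out := by
    intro ω g
    have : (selfEquivSigmaOrbitsQuotientStabilizer Γ X) (g • ω.out) = ⟨ω, (g : Γ ⧸ _)⟩ := by
      rw [← Equiv.eq_symm_apply]; rfl
    simp only [e, Equiv.trans_apply, this]
    rfl
  refine ⟨e, fun h x => ?_⟩
  obtain ⟨g, hg⟩ : x ∈ orbit Γ (Quotient.mk'' x : orbitRel.Quotient Γ X).out :=
    mem_orbit_symm.mp (orbitRel_apply.mp (Quotient.mk_out' x))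
  rw [← hg, smul_smul, he, he, mul_smul]

theorem period_eq_of_zpow_smul_eq_iff {G Z : Type*} [Group G] [MulAction G Z] {g : G}
    {x : Z} {d : ℕ} (h : ∀ m : ℤ, g ^ m • x = x ↔ (d : ℤ) ∣ m) : period g x = d := by
  have h' : ∀ m : ℤ, (period g x : ℤ) ∣ m ↔ (d : ℤ) ∣ m := fun m =>
    zpow_smul_eq_iff_period_dvd.symm.trans (h m)
  exact Nat.dvd_antisymm (Int.natCast_dvd_natCast.1 ((h' d).2 dvd_rfl))
    (Int.natCast_dvd_natCast.1 ((h' _).1 dvd_rfl))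

end MulAction

section Marks

variable {ι X Y : Type*} [PartialOrder ι]

theorem card_filter_le_eq_add_sum [Fintype X] [DecidableEq ι] [DecidableLE ι] [DecidableLT ι]
    (f : X → ι) {V : Finset ι} (hV : ∀ x, f x ∈ V) (v : ι) :
    #{x | v ≤ f x} = #{x | f x = v} + ∑ w ∈ V with v < w, #{x | f x = w} := by
  have hlt : #{x | v < f x} = ∑ w ∈ V with v < w, #{x | f x = w} := by
    rw [card_eq_sum_card_fiberwise (f := f) (t := {w ∈ V | v < w}) (fun x hx => by simp_all)]
    refine sum_congr rfl fun w hw => congrArg card (ext fun x => ?_)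
    simp only [mem_filter, mem_univ, true_and] at hw ⊢
    exact ⟨fun h => h.2, fun h => ⟨h ▸ hw.2, h⟩⟩
  classical
  rw [← hlt, ← card_union_of_disjoint (disjoint_filter.2 fun x _ h => h ▸ lt_irrefl _)]
  congr 1
  ext x
  simp [le_iff_eq_or_lt, eq_comm]

theorem card_fiber_eq_of_card_le_eq [Finite X] [Finite Y] (f : X → ι) (g : Y → ι)
    (h : ∀ v ∈ Set.range f ∪ Set.range g,
      Nat.card {x // v ≤ f x} = Nat.card {y // v ≤ g y}) (v : ι) :
    Nat.card {x // f x = v} = Nat.card {y // g y = v} := by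
  classical
  have := Fintype.ofFinite X
  have := Fintype.ofFinite Y
  simp only [Nat.card_eq_fintype_card, Fintype.card_subtype] at h ⊢
  set V := univ.image f ∪ univ.image g
  induction hn : #{w ∈ V | v < w} using Nat.strong_induction_on generalizing v with
  | _ n ih =>
  by_cases hv : v ∈ V
  · have hsum : ∑ w ∈ V with v < w, #{x | f x = w} = ∑ w ∈ V with v < w, #{y | g y = w} := by
      refine sum_congr rfl fun w hw => ih _ ?_ w rfl
      rw [← hn]
      refine card_lt_card (ssubset_iff_of_subset (fun u hu => ?_) |>.2 ⟨w, hw, by simp⟩)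
      simp only [mem_filter] at hu hw ⊢
      exact ⟨hu.1, hw.2.trans hu.2⟩
    have hv' : v ∈ Set.range f ∪ Set.range g := by simpa [V] using hv
    have := h v hv'
    rw [card_filter_le_eq_add_sum f (V := V) (by simp [V]),
      card_filter_le_eq_add_sum g (V := V) (by simp [V]), hsum] at this
    omega
  · have hf : ∀ x, f x ≠ v := fun x hx => hv (by simp [V, ← hx])
    have hg : ∀ y, g y ≠ v := fun y hy => hv (by simp [V, ← hy])
    simp [hf, hg]

end Marks

theorem Subgroup.isCyclic_quotient_zpowers_of_closure_pair_eq_top {Γ : Type*} [CommGroup Γ]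
    {a b : Γ} (hgen : Subgroup.closure {a, b} = ⊤) : IsCyclic (Γ ⧸ Subgroup.zpowers a) := by
  refine isCyclic_iff_exists_zpowers_eq_top.2 ⟨QuotientGroup.mk b, eq_top_iff.2 fun q _ => ?_⟩
  obtain ⟨γ, rfl⟩ := QuotientGroup.mk_surjective q
  obtain ⟨m, n, rfl⟩ := Subgroup.mem_closure_pair.1 (hgen ▸ Subgroup.mem_top γ)
  refine ⟨n, ?_⟩
  simp [(QuotientGroup.eq_one_iff _).2 (Subgroup.mem_zpowers a)]

theorem Subgroup.exists_eq_closure_pair_of_zpow_mem_iff {Γ : Type*} [CommGroup Γ] {a b : Γ}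
    (hgen : Subgroup.closure {a, b} = ⊤) {H : Subgroup Γ} {d : ℕ}
    (hH : ∀ m : ℤ, a ^ m ∈ H ↔ (d : ℤ) ∣ m) : ∃ g, H = Subgroup.closure {a ^ d, g} := by
  have := isCyclic_quotient_zpowers_of_closure_pair_eq_top hgen
  obtain ⟨q, hq⟩ := (H.map (QuotientGroup.mk' (zpowers a))).isCyclic_iff_exists_zpowers_eq_top.1
    inferInstance
  obtain ⟨g, hgH, rfl⟩ := hq ▸ mem_zpowers q
  have hadH : a ^ d ∈ H := by simpa using (hH d).2 dvd_rfl
  refine ⟨g, le_antisymm (fun h hh => ?_) (closure_le _ |>.2 (Set.pair_subset hadH hgH))⟩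
  obtain ⟨k, hk⟩ := mem_zpowers_iff.1 (hq ▸ mem_map_of_mem _ hh)
  obtain ⟨m, hm⟩ := mem_zpowers_iff.1 <| (QuotientGroup.eq (s := zpowers a)).1 <|
    (QuotientGroup.mk_zpow (N := zpowers a) g k).trans (by simpa using hk)
  obtain ⟨t, rfl⟩ := (hH m).1 (hm ▸ H.mul_mem (H.inv_mem (H.zpow_mem hgH k)) hh)
  have : h = g ^ k * (a ^ d) ^ t := by rw [← zpow_natCast, ← zpow_mul, hm]; group
  rw [this]
  exact mul_mem (zpow_mem (subset_closure (by simp)) k) (zpow_mem (subset_closure (by simp)) t)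

theorem Equiv.Perm.card_fixed_eq_of_isConj {β : Type*} {u v : Perm β} (h : IsConj u v) :
    Nat.card {x // u x = x} = Nat.card {x // v x = x} := by
  obtain ⟨c, rfl⟩ := isConj_iff.1 h
  exact Nat.card_congr (c.subtypeEquiv fun x => by simp [Perm.mul_apply])

section ElementConjugate

variable {Γ β : Type*} [CommGroup Γ]

/-- Definitionally the stabilizer of `x` for `MulAction.compHom β χ`. -/
def permStabilizer (χ : Γ →* Perm β) (x : β) : Subgroup Γ :=
  (stabilizer (Perm β) x).comap χ

theorem mem_permStabilizer {χ : Γ →* Perm β} {x : β} {γ : Γ} :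
    γ ∈ permStabilizer χ x ↔ χ γ x = x :=
  Iff.rfl

theorem exists_conj_of_card_permStabilizer_eq [Finite β] {χ₁ χ₂ : Γ →* Perm β}
    (h : ∀ H : Subgroup Γ, Nat.card {x // permStabilizer χ₁ x = H} =
      Nat.card {x // permStabilizer χ₂ x = H}) :
    ∃ ρ : Perm β, ∀ γ, ρ * χ₁ γ * ρ⁻¹ = χ₂ γ := by
  obtain ⟨e, he⟩ := @exists_equiv_smul_of_card_stabilizer_eq Γ β β _
    (MulAction.compHom β χ₁) (MulAction.compHom β χ₂) _ _ h
  refine ⟨e, fun γ => Equiv.ext fun y => ?_⟩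
  have hy : e (χ₁ γ (e.symm y)) = χ₂ γ (e (e.symm y)) := he γ (e.symm y)
  rw [Equiv.apply_symm_apply] at hy
  simpa [Perm.mul_apply] using hy

theorem exists_conj_of_isConj_of_period [Finite β] {a b : Γ}
    (hgen : Subgroup.closure {a, b} = ⊤) {d : ℕ} {χ₁ χ₂ : Γ →* Perm β} (ha : χ₁ a = χ₂ a)
    (hper : ∀ x : β, period (χ₁ a) x = d) (hconj : ∀ γ, IsConj (χ₁ γ) (χ₂ γ)) :
    ∃ ρ : Perm β, ∀ γ, ρ * χ₁ γ * ρ⁻¹ = χ₂ γ := by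
  have hmem : ∀ χ : Γ →* Perm β, χ a = χ₁ a →
      ∀ x (m : ℤ), a ^ m ∈ permStabilizer χ x ↔ (d : ℤ) ∣ m := by
    intro χ hχ x m
    rw [mem_permStabilizer, map_zpow, hχ, ← hper x, ← zpow_smul_eq_iff_period_dvd]
    rfl
  have hcard : ∀ χ : Γ →* Perm β, χ a = χ₁ a → ∀ g,
      Nat.card {x // Subgroup.closure {a ^ d, g} ≤ permStabilizer χ x} =
        Nat.card {x // χ g x = x} := by
    intro χ hχ g
    refine Nat.card_congr (Equiv.subtypeEquivRight fun x => ?_)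
    have had : a ^ d ∈ permStabilizer χ x := by simpa using (hmem χ hχ x d).2 dvd_rfl
    simp [Subgroup.closure_le, Set.insert_subset_iff, had, mem_permStabilizer]
  refine exists_conj_of_card_permStabilizer_eq (card_fiber_eq_of_card_le_eq _ _ fun v hv => ?_)
  obtain ⟨g, rfl⟩ : ∃ g, v = Subgroup.closure {a ^ d, g} := by
    rcases hv with ⟨x, rfl⟩ | ⟨x, rfl⟩
    exacts [Subgroup.exists_eq_closure_pair_of_zpow_mem_iff hgen (hmem χ₁ rfl x),
      Subgroup.exists_eq_closure_pair_of_zpow_mem_iff hgen (hmem χ₂ ha.symm x)]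
  rw [hcard χ₁ rfl, hcard χ₂ ha.symm]
  exact Perm.card_fixed_eq_of_isConj (hconj g)

end ElementConjugate

theorem Commute.subtypePerm {α : Type*} {p : α → Prop} {u w : Perm α} (h : Commute u w)
    (hu : ∀ x, p (u x) ↔ p x) (hw : ∀ x, p (w x) ↔ p x) :
    Commute (u.subtypePerm hu) (w.subtypePerm hw) := by
  ext x
  simp only [Perm.coe_mul, Function.comp_apply, subtypePerm_apply]
  exact Perm.ext_iff.1 h.eq x

def MonoidHom.subtypePerm {Γ α : Type*} [Monoid Γ] (χ : Γ →* Perm α) (p : α → Prop)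
    (h : ∀ γ x, p (χ γ x) ↔ p x) : Γ →* Perm (Subtype p) where
  toFun γ := (χ γ).subtypePerm (h γ)
  map_one' := by ext; simp
  map_mul' _ _ := by
    ext; simp only [map_mul, Perm.coe_mul, Function.comp_apply, subtypePerm_apply]

theorem MonoidHom.subtypePerm_apply {Γ α : Type*} [Monoid Γ] (χ : Γ →* Perm α) (p : α → Prop)
    (h : ∀ γ x, p (χ γ x) ↔ p x) (γ : Γ) : χ.subtypePerm p h γ = (χ γ).subtypePerm (h γ) :=
  rfl

namespace Equiv.Perm

section Period

variable {α : Type*}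

theorem period_apply_of_commute {u σ : Perm α} (h : Commute u σ) (x : α) :
    period σ (u x) = period σ x :=
  period_eq_of_zpow_smul_eq_iff fun m => by
    rw [Perm.smul_def, ← mul_apply, ← (h.zpow_right m).eq, mul_apply, u.injective.eq_iff,
      ← Perm.smul_def, zpow_smul_eq_iff_period_dvd]

theorem period_subtypePerm {p : α → Prop} (u : Perm α) (h : ∀ x, p (u x) ↔ p x)
    (x : Subtype p) : period (u.subtypePerm h) x = period u (x : α) :=
  period_eq_of_zpow_smul_eq_iff fun m => by
    rw [Perm.smul_def, subtypePerm_zpow, Subtype.ext_iff, subtypePerm_apply]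
    exact zpow_smul_eq_iff_period_dvd (g := u) (a := (x : α))

theorem isConj_subtypePerm_of_conj {p : α → Prop} {ρ u v : Perm α} (hρ : ∀ x, p (ρ x) ↔ p x)
    (hu : ∀ x, p (u x) ↔ p x) (hv : ∀ x, p (v x) ↔ p x) (h : ρ * u * ρ⁻¹ = v) :
    IsConj (u.subtypePerm hu) (v.subtypePerm hv) :=
  isConj_iff.2 ⟨ρ.subtypePerm hρ, by
    subst h
    ext x
    simp only [Perm.coe_mul, Function.comp_apply, subtypePerm_apply, inv_subtypePerm]⟩

end Period

variable {α : Type*} [Fintype α] [DecidableEq α]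

theorem zpow_list_prod_apply_of_mem_support {l : List (Perm α)} (hl : l.Pairwise Disjoint)
    {f : Perm α} (hf : f ∈ l) {x : α} (hx : x ∈ f.support) (m : ℤ) :
    (l.prod ^ m) x = (f ^ m) x := by
  induction l with
  | nil => simp at hf
  | cons g t ih =>
    rw [List.pairwise_cons] at hl
    have hgt : Disjoint g t.prod := disjoint_prod_right t hl.1
    rw [List.prod_cons, hgt.commute.mul_zpow, mul_apply]
    rcases List.mem_cons.1 hf with rfl | hf
    · rw [zpow_apply_eq_self_of_apply_eq_self ((hgt x).resolve_left (mem_support.1 hx))]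
    · have hfx : (f ^ m) x ∈ f.support := zpow_apply_mem_support.2 hx
      rw [ih hl.2 hf, zpow_apply_eq_self_of_apply_eq_self
        (((hl.1 f hf) _).resolve_right (mem_support.1 hfx))]

theorem mem_support_list_prod_iff {l : List (Perm α)} (hl : l.Pairwise Disjoint) {x : α} :
    x ∈ l.prod.support ↔ ∃ f ∈ l, x ∈ f.support := by
  refine ⟨exists_mem_support_of_mem_support_prod, fun ⟨f, hf, hx⟩ => ?_⟩
  have := zpow_list_prod_apply_of_mem_support hl hf hx 1
  rw [zpow_one, zpow_one] at this
  rw [mem_support, this]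
  exact mem_support.1 hx

theorem period_list_prod_of_mem_support {l : List (Perm α)} (hl : l.Pairwise Disjoint)
    {f : Perm α} (hf : f ∈ l) {x : α} (hx : x ∈ f.support) : period l.prod x = period f x :=
  period_eq_of_zpow_smul_eq_iff fun m => by
    rw [Perm.smul_def, zpow_list_prod_apply_of_mem_support hl hf hx, ← Perm.smul_def,
      zpow_smul_eq_iff_period_dvd]

theorem IsCycle.period_of_mem_support {f : Perm α} (hf : f.IsCycle) {x : α}
    (hx : x ∈ f.support) : period f x = #f.support :=
  period_eq_of_zpow_smul_eq_iff fun m => by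
    rw [Perm.smul_def]
    exact (coe_support_eq_set_support f ▸ hf.isCycleOn).zpow_apply_eq hx

theorem period_ofFn_prod_of_isCycle {k d : ℕ} {τ : Fin k → Perm α} (hcyc : ∀ j, (τ j).IsCycle)
    (hcard : ∀ j, #(τ j).support = d) (hdisj : ∀ j j', j ≠ j' → Disjoint (τ j) (τ j')) {x : α}
    (hx : x ∈ (List.ofFn τ).prod.support) : period (List.ofFn τ).prod x = d := by
  have hl : (List.ofFn τ).Pairwise Disjoint := List.pairwise_ofFn.2 fun j j' h => hdisj j j' h.ne
  obtain ⟨f, hf, hxf⟩ := (mem_support_list_prod_iff hl).1 hx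
  obtain ⟨j, rfl⟩ := List.mem_ofFn.1 hf
  rw [period_list_prod_of_mem_support hl hf hxf, (hcyc j).period_of_mem_support hxf, hcard j]

theorem apply_mem_support_iff_of_commute {u σ : Perm α} (h : Commute u σ) {x : α} :
    u x ∈ σ.support ↔ x ∈ σ.support := by
  rw [mem_support, mem_support, ← mul_apply, ← h.eq, mul_apply, u.injective.ne_iff]

theorem support_ofSubtype_subset {s : Finset α} (u : Perm s) : (ofSubtype u).support ⊆ s := by
  intro x hx
  rw [support_ofSubtype] at hx
  obtain ⟨y, -, rfl⟩ := Finset.mem_map.1 hx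
  exact y.2

theorem isConj_ofSubtype_iff {p : α → Prop} [DecidablePred p] {u v : Perm (Subtype p)} :
    IsConj (ofSubtype u) (ofSubtype v) ↔ IsConj u v := by
  simp only [isConj_iff_cycleType_eq, cycleType_ofSubtype]

section Blocks

variable {k : ℕ} {B : Fin k → Finset α}

theorem ofFn_prod_apply_of_mem (hB : ∀ i j, i ≠ j → _root_.Disjoint (B i) (B j))
    {v : Fin k → Perm α} (hv : ∀ j, (v j).support ⊆ B j) {i : Fin k} {x : α} (hx : x ∈ B i) :
    (List.ofFn v).prod x = v i x := by
  by_cases hxi : x ∈ (v i).support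
  · have hl : (List.ofFn v).Pairwise Disjoint := List.pairwise_ofFn.2 fun j j' hjj' =>
      disjoint_iff_disjoint_support.2 ((hB j j' hjj'.ne).mono (hv j) (hv j'))
    simpa using zpow_list_prod_apply_of_mem_support hl (List.mem_ofFn.2 ⟨i, rfl⟩) hxi 1
  · rw [notMem_support.1 hxi, ← notMem_support]
    intro hx'
    obtain ⟨f, hf, hxf⟩ := exists_mem_support_of_mem_support_prod hx'
    obtain ⟨j, rfl⟩ := List.mem_ofFn.1 hf
    obtain rfl : j = i := by_contra fun hji => disjoint_left.1 (hB j i hji) (hv j hxf) hx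
    exact hxi hxf

theorem ofFn_prod_ofSubtype_subtypePerm (hB : ∀ i j, i ≠ j → _root_.Disjoint (B i) (B j))
    (hcover : ∀ x, ∃ i, x ∈ B i) {u : Perm α} (hu : ∀ i x, u x ∈ B i ↔ x ∈ B i) :
    (List.ofFn fun i => ofSubtype (u.subtypePerm (hu i))).prod = u := by
  ext x
  obtain ⟨i, hi⟩ := hcover x
  rw [ofFn_prod_apply_of_mem hB (fun j => support_ofSubtype_subset _) hi,
    ofSubtype_subtypePerm_of_mem _ hi]

theorem eq_of_ofFn_prod_eq (hB : ∀ i j, i ≠ j → _root_.Disjoint (B i) (B j))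
    {v w : Fin k → Perm α} (hv : ∀ j, (v j).support ⊆ B j) (hw : ∀ j, (w j).support ⊆ B j)
    (h : (List.ofFn v).prod = (List.ofFn w).prod) : v = w := by
  funext i
  ext x
  by_cases hx : x ∈ B i
  · rw [← ofFn_prod_apply_of_mem hB hv hx, ← ofFn_prod_apply_of_mem hB hw hx, h]
  · rw [notMem_support.1 (fun h => hx (hv i h)), notMem_support.1 (fun h => hx (hw i h))]

theorem eq_ofFn_prod_iff (hB : ∀ i j, i ≠ j → _root_.Disjoint (B i) (B j))
    (hcover : ∀ x, ∃ i, x ∈ B i) {u : Perm α} (hu : ∀ i x, u x ∈ B i ↔ x ∈ B i)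
    {v : Fin k → Perm α} (hv : ∀ j, (v j).support ⊆ B j) :
    u = (List.ofFn v).prod ↔ v = fun j => ofSubtype (u.subtypePerm (hu j)) := by
  refine ⟨fun h => eq_of_ofFn_prod_eq hB hv (fun j => support_ofSubtype_subset _) ?_,
    fun h => h ▸ (ofFn_prod_ofSubtype_subtypePerm hB hcover hu).symm⟩
  rw [← h, ofFn_prod_ofSubtype_subtypePerm hB hcover hu]

theorem ofFn_prod_mul_ofFn_prod (hB : ∀ i j, i ≠ j → _root_.Disjoint (B i) (B j))
    (hcover : ∀ x, ∃ i, x ∈ B i) {v w : Fin k → Perm α} (hv : ∀ j, (v j).support ⊆ B j)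
    (hw : ∀ j, (w j).support ⊆ B j) :
    (List.ofFn v).prod * (List.ofFn w).prod = (List.ofFn fun j => v j * w j).prod := by
  ext x
  obtain ⟨i, hi⟩ := hcover x
  have hvw : ∀ j, (v j * w j).support ⊆ B j := fun j =>
    (support_mul_le _ _).trans (union_subset (hv j) (hw j))
  rw [mul_apply, ofFn_prod_apply_of_mem hB hw hi,
    ofFn_prod_apply_of_mem hB hv ((isInvariant_of_support_le (hw i) x).2 hi),
    ofFn_prod_apply_of_mem hB hvw hi, mul_apply]

theorem conj_ofFn_prod_ofSubtype (hB : ∀ i j, i ≠ j → _root_.Disjoint (B i) (B j))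
    (hcover : ∀ x, ∃ i, x ∈ B i) {u v : Perm α} (hu : ∀ i x, u x ∈ B i ↔ x ∈ B i)
    (hv : ∀ i x, v x ∈ B i ↔ x ∈ B i) (ρ : ∀ i, Perm (B i))
    (hρ : ∀ i, ρ i * u.subtypePerm (hu i) * (ρ i)⁻¹ = v.subtypePerm (hv i)) :
    (List.ofFn fun i => ofSubtype (ρ i)).prod * u * (List.ofFn fun i => ofSubtype (ρ i)).prod⁻¹
      = v := by
  rw [mul_inv_eq_iff_eq_mul]
  conv_lhs => rw [← ofFn_prod_ofSubtype_subtypePerm hB hcover hu]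
  conv_rhs => rw [← ofFn_prod_ofSubtype_subtypePerm hB hcover hv]
  have hs : ∀ w : ∀ i, Perm (B i), ∀ i, (ofSubtype (w i)).support ⊆ B i := fun w i =>
    support_ofSubtype_subset (w i)
  rw [ofFn_prod_mul_ofFn_prod hB hcover (hs _) (hs _),
    ofFn_prod_mul_ofFn_prod hB hcover (hs _) (hs _)]
  simp only [← map_mul, ← hρ, inv_mul_cancel_right]

end Blocks

section SupportBlocks

variable {l : ℕ} {σ : Perm α} {σs : Fin l → Perm α}

/-- Block `0` is `Fix(σ)`, block `i + 1` is the support of `σᵢ`. -/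
def supportBlocks (σ : Perm α) (σs : Fin l → Perm α) : Fin (l + 1) → Finset α :=
  Fin.cons σ.supportᶜ fun i => (σs i).support

variable (hdisj : ∀ i i', i ≠ i' → Disjoint (σs i) (σs i')) (hσ : σ = (List.ofFn σs).prod)
include hdisj hσ

theorem mem_support_iff_exists_of_eq_ofFn_prod {x : α} :
    x ∈ σ.support ↔ ∃ i, x ∈ (σs i).support := by
  rw [hσ, mem_support_list_prod_iff (List.pairwise_ofFn.2 fun i j h => hdisj i j h.ne)]
  simp

theorem period_of_mem_support_of_eq_ofFn_prod {i : Fin l} {x : α} (hx : x ∈ (σs i).support) :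
    period σ x = period (σs i) x := by
  rw [hσ]
  exact period_list_prod_of_mem_support (List.pairwise_ofFn.2 fun i j h => hdisj i j h.ne)
    (List.mem_ofFn.2 ⟨i, rfl⟩) hx

theorem supportBlocks_disjoint :
    ∀ j j', j ≠ j' → _root_.Disjoint (supportBlocks σ σs j) (supportBlocks σ σs j') := by
  have hT : ∀ i, _root_.Disjoint σ.supportᶜ (σs i).support := fun i =>
    disjoint_left.2 fun x hx hxi =>
      mem_compl.1 hx ((mem_support_iff_exists_of_eq_ofFn_prod hdisj hσ).2 ⟨i, hxi⟩)
  intro j j' hjj'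
  induction j using Fin.cases with
  | zero => induction j' using Fin.cases with
    | zero => exact absurd rfl hjj'
    | succ i' => exact hT i'
  | succ i => induction j' using Fin.cases with
    | zero => exact (hT i).symm
    | succ i' => exact disjoint_iff_disjoint_support.1 (hdisj i i' (by simpa using hjj'))

theorem exists_mem_supportBlocks (x : α) : ∃ j, x ∈ supportBlocks σ σs j := by
  by_cases hx : x ∈ σ.support
  · obtain ⟨i, hi⟩ := (mem_support_iff_exists_of_eq_ofFn_prod hdisj hσ).1 hx
    exact ⟨i.succ, by simpa [supportBlocks] using hi⟩
  · exact ⟨0, by simpa [supportBlocks] using hx⟩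

theorem eq_mul_ofFn_prod_iff {w : Perm α}
    (hw : ∀ j x, w x ∈ supportBlocks σ σs j ↔ x ∈ supportBlocks σ σs j) {p₀ : Perm α}
    {p : Fin l → Perm α} (hp₀ : p₀.support ⊆ σ.supportᶜ)
    (hp : ∀ i, (p i).support ⊆ (σs i).support) :
    w = p₀ * (List.ofFn p).prod ↔ p₀ = ofSubtype (w.subtypePerm (hw 0)) ∧
      ∀ i, p i = ofSubtype (w.subtypePerm (hw i.succ)) := by
  have := eq_ofFn_prod_iff (supportBlocks_disjoint hdisj hσ) (exists_mem_supportBlocks hdisj hσ) hw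
    (v := Fin.cons p₀ p) fun j => by
      induction j using Fin.cases <;> simp [supportBlocks, hp₀, hp]
  simpa [List.ofFn_succ, funext_iff, Fin.forall_fin_succ] using this

variable {d : Fin l → ℕ} (hper : ∀ i, ∀ x ∈ (σs i).support, period (σs i) x = d i)
include hper

theorem period_of_mem_supportBlocks {j : Fin (l + 1)} {x : α}
    (hx : x ∈ supportBlocks σ σs j) : period σ x = (Fin.cons 1 d : Fin (l + 1) → ℕ) j := by
  induction j using Fin.cases with
  | zero => simpa [supportBlocks, period_eq_one_iff, Perm.smul_def] using hx
  | succ i =>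
    simp only [supportBlocks, Fin.cons_succ] at hx ⊢
    rw [period_of_mem_support_of_eq_ofFn_prod hdisj hσ hx, hper i x hx]

theorem mem_support_iff_period_eq (hd : Function.Injective d) {i : Fin l} {x : α} :
    x ∈ (σs i).support ↔ x ∈ σ.support ∧ period σ x = d i := by
  refine ⟨fun hx => ⟨(mem_support_iff_exists_of_eq_ofFn_prod hdisj hσ).2 ⟨i, hx⟩,
    (period_of_mem_support_of_eq_ofFn_prod hdisj hσ hx).trans (hper i x hx)⟩, ?_⟩
  rintro ⟨hx, hpx⟩
  obtain ⟨i', hi'⟩ := (mem_support_iff_exists_of_eq_ofFn_prod hdisj hσ).1 hx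
  rw [period_of_mem_support_of_eq_ofFn_prod hdisj hσ hi', hper i' x hi'] at hpx
  rwa [← hd hpx]

theorem apply_mem_supportBlocks_iff (hd : Function.Injective d) {u : Perm α} (hu : Commute u σ)
    (j : Fin (l + 1)) (x : α) : u x ∈ supportBlocks σ σs j ↔ x ∈ supportBlocks σ σs j := by
  induction j using Fin.cases with
  | zero => simp [supportBlocks, apply_mem_support_iff_of_commute hu]
  | succ i =>
    simp only [supportBlocks, Fin.cons_succ, mem_support_iff_period_eq hdisj hσ hper hd,
      apply_mem_support_iff_of_commute hu, period_apply_of_commute hu]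

end SupportBlocks

end Equiv.Perm

theorem exists_decomposition_iff_forall_isConj {n l : ℕ} {σ : Perm (Fin n)}
    {σs : Fin l → Perm (Fin n)} (hdisj : ∀ i i', i ≠ i' → Disjoint (σs i) (σs i'))
    (hσ : σ = (List.ofFn σs).prod)
    (hinv : ∀ w, Commute w σ → ∀ j x, w x ∈ supportBlocks σ σs j ↔ x ∈ supportBlocks σ σs j)
    {u v : Perm (Fin n)} (hu : Commute u σ) (hv : Commute v σ) :
    (∃ (p₀ q₀ : Perm (Fin n)) (p q : Fin l → Perm (Fin n)),
        p₀.support ⊆ σ.supportᶜ ∧ q₀.support ⊆ σ.supportᶜ ∧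
        (∀ i, p i ∈ Cent0 (σs i)) ∧ (∀ i, q i ∈ Cent0 (σs i)) ∧
        u = p₀ * (List.ofFn p).prod ∧ v = q₀ * (List.ofFn q).prod ∧
        IsConj p₀ q₀ ∧ ∀ i, IsConj (p i) (q i)) ↔
      ∀ j, IsConj (u.subtypePerm (hinv u hu j)) (v.subtypePerm (hinv v hv j)) := by
  constructor
  · rintro ⟨p₀, q₀, p, q, hp₀, hq₀, hp, hq, hup, hvq, hpq₀, hpq⟩ j
    obtain ⟨rfl, hpu⟩ :=
      (eq_mul_ofFn_prod_iff hdisj hσ (hinv u hu) hp₀ fun i => (hp i).2).1 hup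
    obtain ⟨rfl, hqv⟩ :=
      (eq_mul_ofFn_prod_iff hdisj hσ (hinv v hv) hq₀ fun i => (hq i).2).1 hvq
    rw [← isConj_ofSubtype_iff]
    induction j using Fin.cases with
    | zero => exact hpq₀
    | succ i => rw [← hpu, ← hqv]; exact hpq i
  · intro h
    have hσs : ∀ i, σs i = ofSubtype (σ.subtypePerm (hinv σ (Commute.refl σ) i.succ)) :=
      ((eq_mul_ofFn_prod_iff hdisj hσ _ (p₀ := 1) (p := σs) (by simp) fun _ => subset_rfl).1
        (by rw [one_mul, hσ])).2
    have hcent : ∀ w (hw : Commute w σ) i,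
        ofSubtype (w.subtypePerm (hinv w hw i.succ)) ∈ Cent0 (σs i) := fun w hw i =>
      ⟨hσs i ▸ (hw.subtypePerm _ _).map ofSubtype, support_ofSubtype_subset _⟩
    have hdecomp : ∀ w (hw : Commute w σ), w = ofSubtype (w.subtypePerm (hinv w hw 0)) *
        (List.ofFn fun i => ofSubtype (w.subtypePerm (hinv w hw i.succ))).prod := fun w hw =>
      (eq_mul_ofFn_prod_iff hdisj hσ _ (support_ofSubtype_subset _)
        fun _ => support_ofSubtype_subset _).2 ⟨rfl, fun _ => rfl⟩
    exact ⟨_, _, _, _, support_ofSubtype_subset _, support_ofSubtype_subset _, hcent u hu,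
      hcent v hv, hdecomp u hu, hdecomp v hv, isConj_ofSubtype_iff.2 (h 0),
      fun i => isConj_ofSubtype_iff.2 (h i.succ)⟩

/-- local-global for abelian source.
`A` is an abelian group generated by `a, b` and `φ, ψ : A → S_n` satisfy
`φ(a) = ψ(a) = σ = σ₁⋯σ_l` (each `σᵢ` a product of `kᵢ` pairwise disjoint
`dᵢ`-cycles, the `dᵢ` pairwise distinct).  Then `φ` and `ψ` are conjugate iff for
every `g ∈ A` the components of `φ(g)` and `ψ(g)` in the direct product
`S_{Fix(σ)} × Cent₀(σ₁) × ⋯ × Cent₀(σ_l)` are conjugate in `S_n`, i.e. `φ, ψ` are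
element-conjugate on restriction to `S_{Fix(σ)}` and to each `Cent₀(σᵢ)`. -/
theorem abelian_homomorphism_conjugacy_local_global
    {A : Type*} [CommGroup A] (a b : A)
    (hgen : Subgroup.closure ({a, b} : Set A) = ⊤)
    {n l : ℕ} (φ ψ : A →* Equiv.Perm (Fin n))
    (σ : Equiv.Perm (Fin n)) (σs : Fin l → Equiv.Perm (Fin n))
    (k d : Fin l → ℕ) (hd : Function.Injective d)
    (hcycles : ∀ i, ∃ τ : Fin (k i) → Equiv.Perm (Fin n),
      (∀ j, (τ j).IsCycle) ∧ (∀ j, (τ j).support.card = d i) ∧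
      (∀ j j', j ≠ j' → Equiv.Perm.Disjoint (τ j) (τ j')) ∧
      σs i = (List.ofFn τ).prod)
    (hdisjσ : ∀ i i', i ≠ i' → Equiv.Perm.Disjoint (σs i) (σs i'))
    (hσ : σ = (List.ofFn σs).prod)
    (ha : φ a = σ) (ha' : ψ a = σ) :
    (∃ ρ : Equiv.Perm (Fin n), ∀ g : A, ρ * φ g * ρ⁻¹ = ψ g) ↔
      (∀ g : A, ∃ (p₀ q₀ : Equiv.Perm (Fin n)) (p q : Fin l → Equiv.Perm (Fin n)),
        p₀.support ⊆ σ.supportᶜ ∧ q₀.support ⊆ σ.supportᶜ ∧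
        (∀ i, p i ∈ Cent0 (σs i)) ∧ (∀ i, q i ∈ Cent0 (σs i)) ∧
        φ g = p₀ * (List.ofFn p).prod ∧ ψ g = q₀ * (List.ofFn q).prod ∧
        IsConj p₀ q₀ ∧ ∀ i, IsConj (p i) (q i)) := by
  have hper : ∀ i, ∀ x ∈ (σs i).support, period (σs i) x = d i := fun i x hx => by
    obtain ⟨τ, hcyc, hcard, hdisj, hστ⟩ := hcycles i
    rw [hστ] at hx ⊢
    exact period_ofFn_prod_of_isCycle hcyc hcard hdisj hx
  have hinv := fun u (hu : Commute u σ) => apply_mem_supportBlocks_iff hdisjσ hσ hper hd hu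
  have hcomm : ∀ χ : A →* Perm (Fin n), χ a = σ → ∀ g, Commute (χ g) σ := fun χ hχ g =>
    hχ ▸ (Commute.all g a).map χ
  simp only [exists_decomposition_iff_forall_isConj hdisjσ hσ hinv (hcomm φ ha _) (hcomm ψ ha' _)]
  constructor
  · rintro ⟨ρ, hρ⟩ g j
    have hρσ : Commute ρ σ := mul_inv_eq_iff_eq_mul.1 (by simpa [ha, ha'] using hρ a)
    exact isConj_subtypePerm_of_conj (hinv ρ hρσ j) _ _ (hρ g)
  · intro h
    choose ρ hρ using fun j => exists_conj_of_isConj_of_period hgen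
      (χ₁ := φ.subtypePerm _ fun g => hinv _ (hcomm φ ha g) j)
      (χ₂ := ψ.subtypePerm _ fun g => hinv _ (hcomm ψ ha' g) j)
      (by ext; simp [MonoidHom.subtypePerm_apply, ha, ha'])
      (fun x => by
        rw [MonoidHom.subtypePerm_apply, period_subtypePerm, ha]
        exact period_of_mem_supportBlocks hdisjσ hσ hper x.2)
      (fun g => h g j)
    exact ⟨_, fun g => conj_ofFn_prod_ofSubtype (supportBlocks_disjoint hdisjσ hσ)
      (exists_mem_supportBlocks hdisjσ hσ) (hinv _ (hcomm φ ha g)) (hinv _ (hcomm ψ ha' g)) ρ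
      fun j => hρ j g⟩
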